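/- arXiv:2112.08451 — 2 statements merged into one kernel-verified Lean document; each statement's English description precedes it below -/
import Mathlib

section
/- Let π be a policy of a finite MDP with discount γ ∈ [0,1), let P^π be the associated SA×SA transition matrix and σ(v^π) ∈ ℝ^{SA} the vector of per-state-action standard deviations of v^π under p(·|s,a). Then ‖(I - γP^π)^{-1} σ(v^π)‖_∞ ≤ √2 · (1-γ)^{-1.5}. -/
open Finset

/-- Comparison principle: if (I - γP)z ≥ 0 componentwise, then z ≥ 0. -/
lemma aux_cmp {n : Type*} [Fintype n] (P : Matrix n n ℝ)
    (hP0 : ∀ i j, 0 ≤ P i j) (hP1 : ∀ i, ∑ j, P i j = 1)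
    (γ : ℝ) (hγ0 : 0 ≤ γ) (hγ1 : γ < 1)
    (z : n → ℝ) (hz : ∀ i, 0 ≤ z i - γ * (P.mulVec z) i) :
    ∀ i, 0 ≤ z i := by
  intro i
  obtain ⟨i₀, -, hmin⟩ := Finset.exists_min_image Finset.univ z ⟨i, Finset.mem_univ i⟩
  have hmv : (P.mulVec z) i₀ = ∑ j, P i₀ j * z j := by
    simp [Matrix.mulVec, dotProduct]
  have hge : z i₀ ≤ (P.mulVec z) i₀ := by
    rw [hmv]
    calc z i₀ = ∑ j, P i₀ j * z i₀ := by rw [← Finset.sum_mul, hP1, one_mul]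
    _ ≤ ∑ j, P i₀ j * z j :=
      Finset.sum_le_sum fun j _ => mul_le_mul_of_nonneg_left (hmin j (Finset.mem_univ j)) (hP0 i₀ j)
  have h0 := hz i₀
  have h1 : 0 ≤ z i₀ := by nlinarith
  linarith [hmin i (Finset.mem_univ i)]

/-- Jensen for sqrt. -/
lemma aux_jensen {ι : Type*} (s : Finset ι) (p t : ι → ℝ)
    (hp : ∀ i ∈ s, 0 ≤ p i) (ht : ∀ i ∈ s, 0 ≤ t i) (hp1 : ∑ i ∈ s, p i = 1) :
    ∑ i ∈ s, p i * Real.sqrt (t i) ≤ Real.sqrt (∑ i ∈ s, p i * t i) := by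
  have key : (∑ i ∈ s, p i * Real.sqrt (t i)) ^ 2 ≤ ∑ i ∈ s, p i * t i := by
    calc (∑ i ∈ s, p i * Real.sqrt (t i)) ^ 2
        = (∑ i ∈ s, Real.sqrt (p i) * (Real.sqrt (p i) * Real.sqrt (t i))) ^ 2 := by
          congr 1
          exact Finset.sum_congr rfl fun i hi =>
            (by rw [← mul_assoc, Real.mul_self_sqrt (hp i hi)] :
              Real.sqrt (p i) * (Real.sqrt (p i) * Real.sqrt (t i)) = p i * Real.sqrt (t i)).symm
      _ ≤ (∑ i ∈ s, Real.sqrt (p i) ^ 2) * ∑ i ∈ s, (Real.sqrt (p i) * Real.sqrt (t i)) ^ 2 :=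
          Finset.sum_mul_sq_le_sq_mul_sq s _ _
      _ = (∑ i ∈ s, p i) * ∑ i ∈ s, p i * t i := by
          congr 1
          · exact Finset.sum_congr rfl fun i hi => Real.sq_sqrt (hp i hi)
          · exact Finset.sum_congr rfl fun i hi => by
              rw [mul_pow, Real.sq_sqrt (hp i hi), Real.sq_sqrt (ht i hi)]
      _ = ∑ i ∈ s, p i * t i := by rw [hp1, one_mul]
  have hnn : 0 ≤ ∑ i ∈ s, p i * Real.sqrt (t i) :=
    Finset.sum_nonneg fun i hi => mul_nonneg (hp i hi) (Real.sqrt_nonneg _)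
  exact (Real.le_sqrt hnn (le_trans (sq_nonneg _) key)).2 key

/-- scalar Cauchy-Schwarz step -/
lemma aux_cs (γ a T W : ℝ) (hγ0 : 0 ≤ γ) (hγ1 : γ < 1) (ha : 0 ≤ a)
    (hT : 0 ≤ T) (hW : 0 ≤ W) (h : γ * T ≤ W - a ^ 2) :
    a + γ * Real.sqrt ((1 - γ)⁻¹ * T) ≤ Real.sqrt ((1 - γ)⁻¹ * W) := by
  have hs : 0 < 1 - γ := by linarith
  have hK0 : 0 < (1 - γ)⁻¹ := inv_pos.2 hs
  have hKs : (1 - γ) * (1 - γ)⁻¹ = 1 := mul_inv_cancel₀ hs.ne'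
  have ha2W : a ^ 2 ≤ W := by nlinarith
  set t : ℝ := Real.sqrt ((1 - γ)⁻¹ * (γ * (W - a ^ 2))) with htdef
  have ht0 : 0 ≤ t := Real.sqrt_nonneg _
  have hKγ : 0 ≤ (1 - γ)⁻¹ * (γ * (W - a ^ 2)) := by
    apply mul_nonneg hK0.le (mul_nonneg hγ0 (by linarith))
  have ht2 : t ^ 2 = (1 - γ)⁻¹ * (γ * (W - a ^ 2)) := Real.sq_sqrt hKγ
  have h1 : γ * Real.sqrt ((1 - γ)⁻¹ * T) ≤ t := by
    have he : γ * Real.sqrt ((1 - γ)⁻¹ * T) = Real.sqrt (γ ^ 2 * ((1 - γ)⁻¹ * T)) := by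
      rw [Real.sqrt_mul (sq_nonneg γ), Real.sqrt_sq hγ0]
    rw [he, htdef]
    apply Real.sqrt_le_sqrt
    have := mul_le_mul_of_nonneg_left h (mul_nonneg hγ0 hK0.le)
    nlinarith
  have e1 : (1 - γ) * t ^ 2 = γ * (W - a ^ 2) := by
    rw [ht2, ← mul_assoc, hKs, one_mul]
  have h2 : a + t ≤ Real.sqrt ((1 - γ)⁻¹ * W) := by
    apply (Real.le_sqrt (by positivity) (by positivity)).2
    have goal' : (1 - γ) * (a + t) ^ 2 ≤ W := by
      rcases eq_or_lt_of_le hγ0 with hγ | hγ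
      · have ht' : t = 0 := by nlinarith
        rw [ht']
        nlinarith
      · nlinarith [sq_nonneg (γ * a - (1 - γ) * t), mul_pos hγ hs, mul_nonneg ha ht0]
    calc (a + t) ^ 2 = (1 - γ)⁻¹ * ((1 - γ) * (a + t) ^ 2) := by
          rw [← mul_assoc, mul_comm ((1:ℝ)-γ)⁻¹, hKs, one_mul]
      _ ≤ (1 - γ)⁻¹ * W := mul_le_mul_of_nonneg_left goal' hK0.le
  linarith

theorem stmt_17 {S A : Type*} [Fintype S] [Fintype A] [DecidableEq S] [DecidableEq A]
    (p : S → A → S → ℝ) (hp0 : ∀ s a s', 0 ≤ p s a s') (hp1 : ∀ s a, ∑ s', p s a s' = 1)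
    (r : S → A → ℝ) (hr : ∀ s a, 0 ≤ r s a ∧ r s a ≤ 1)
    (γ : ℝ) (hγ0 : 0 ≤ γ) (hγ1 : γ < 1) (π : S → A)
    (vπ : S → ℝ)
    (hbellman : ∀ s, vπ s = r s (π s) + γ * ∑ s', p s (π s) s' * vπ s')
    (Pπ : Matrix (S × A) (S × A) ℝ)
    (hPπ : ∀ sa sa' : S × A, Pπ sa sa' = if sa'.2 = π sa'.1 then p sa.1 sa.2 sa'.1 else 0)
    (σv : S × A → ℝ)
    (hσv : ∀ sa : S × A, σv sa =
      Real.sqrt (∑ s', p sa.1 sa.2 s' * (vπ s' - ∑ s'', p sa.1 sa.2 s'' * vπ s'') ^ 2)) :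
    ‖(1 - γ • Pπ)⁻¹.mulVec σv‖ ≤ Real.sqrt 2 * (1 - γ) ^ (-(1.5 : ℝ)) := by
  have hs : 0 < 1 - γ := by linarith
  set K : ℝ := (1 - γ)⁻¹ with hK
  have hK0 : 0 < K := inv_pos.2 hs
  have hKs : (1 - γ) * K = 1 := mul_inv_cancel₀ hs.ne'
  have hKK : (1 - γ) * K ^ 2 = K := by
    calc (1 - γ) * K ^ 2 = ((1 - γ) * K) * K := by ring
    _ = K := by rw [hKs, one_mul]
  -- entries of Pπ
  have hP0 : ∀ i j : S × A, 0 ≤ Pπ i j := by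
    intro i j
    rw [hPπ]
    split
    · exact hp0 _ _ _
    · exact le_refl 0
  -- row applications
  have hProw : ∀ (i : S × A) (f : S × A → ℝ),
      (Pπ.mulVec f) i = ∑ s', p i.1 i.2 s' * f (s', π s') := by
    intro i f
    have h0 : (Pπ.mulVec f) i = ∑ j : S × A, Pπ i j * f j := by
      simp [Matrix.mulVec, dotProduct]
    rw [h0, Fintype.sum_prod_type]
    refine Finset.sum_congr rfl fun s' _ => ?_
    simp only [hPπ, ite_mul, zero_mul]
    rw [Finset.sum_ite_eq' Finset.univ (π s') (fun a' => p i.1 i.2 s' * f (s', a'))]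
    simp
  have hProw1 : ∀ i : S × A, ∑ j, Pπ i j = 1 := by
    intro i
    have := hProw i (fun _ => 1)
    have h0 : (Pπ.mulVec fun _ => (1:ℝ)) i = ∑ j : S × A, Pπ i j := by
      simp [Matrix.mulVec, dotProduct]
    rw [h0] at this
    rw [this]
    simp only [mul_one]
    exact hp1 i.1 i.2
  -- bounds on vπ
  have hv0 : ∀ s : S, 0 ≤ vπ s := by
    intro s
    obtain ⟨s₀, -, hmin⟩ := Finset.exists_min_image Finset.univ vπ ⟨s, Finset.mem_univ s⟩
    have h1 := hbellman s₀
    have h2 : vπ s₀ ≤ ∑ s', p s₀ (π s₀) s' * vπ s' := by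
      calc vπ s₀ = ∑ s', p s₀ (π s₀) s' * vπ s₀ := by rw [← Finset.sum_mul, hp1, one_mul]
      _ ≤ ∑ s', p s₀ (π s₀) s' * vπ s' :=
        Finset.sum_le_sum fun s' _ =>
          mul_le_mul_of_nonneg_left (hmin s' (Finset.mem_univ s')) (hp0 _ _ _)
    have hr0 := (hr s₀ (π s₀)).1
    have h3 : 0 ≤ vπ s₀ := by nlinarith [mul_le_mul_of_nonneg_left h2 hγ0]
    linarith [hmin s (Finset.mem_univ s)]
  have hvK : ∀ s : S, vπ s ≤ K := by
    intro s
    obtain ⟨s₁, -, hmax⟩ := Finset.exists_max_image Finset.univ vπ ⟨s, Finset.mem_univ s⟩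
    have h1 := hbellman s₁
    have h2 : ∑ s', p s₁ (π s₁) s' * vπ s' ≤ vπ s₁ := by
      calc ∑ s', p s₁ (π s₁) s' * vπ s'
          ≤ ∑ s', p s₁ (π s₁) s' * vπ s₁ :=
        Finset.sum_le_sum fun s' _ =>
          mul_le_mul_of_nonneg_left (hmax s' (Finset.mem_univ s')) (hp0 _ _ _)
      _ = vπ s₁ := by rw [← Finset.sum_mul, hp1, one_mul]
    have hr1 := (hr s₁ (π s₁)).2
    have h3 : vπ s₁ ≤ K := by nlinarith [mul_le_mul_of_nonneg_left h2 hγ0]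
    linarith [hmax s (Finset.mem_univ s)]
  -- mean bounds
  have hq0 : ∀ sa : S × A, 0 ≤ ∑ s', p sa.1 sa.2 s' * vπ s' := fun sa =>
    Finset.sum_nonneg fun s' _ => mul_nonneg (hp0 _ _ _) (hv0 s')
  have hqK : ∀ sa : S × A, ∑ s', p sa.1 sa.2 s' * vπ s' ≤ K := by
    intro sa
    calc ∑ s', p sa.1 sa.2 s' * vπ s' ≤ ∑ s', p sa.1 sa.2 s' * K :=
      Finset.sum_le_sum fun s' _ => mul_le_mul_of_nonneg_left (hvK s') (hp0 _ _ _)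
    _ = K := by rw [← Finset.sum_mul, hp1, one_mul]
  -- the comparison function
  set u : S × A → ℝ := fun sa => K ^ 2 - (∑ s', p sa.1 sa.2 s' * vπ s') ^ 2 with hu
  set y : S × A → ℝ := fun sa => Real.sqrt (K * u sa) with hy
  have hu0 : ∀ sa, 0 ≤ u sa := by
    intro sa
    simp only [hu]
    nlinarith [hq0 sa, hqK sa]
  have huC : ∀ sa, u sa ≤ K ^ 2 := by
    intro sa
    simp only [hu]
    nlinarith [hq0 sa]
  -- σ facts
  have hσ0 : ∀ sa, 0 ≤ σv sa := by
    intro sa; rw [hσv]; exact Real.sqrt_nonneg _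
  have hσsq : ∀ sa : S × A, σv sa ^ 2 =
      (∑ s', p sa.1 sa.2 s' * vπ s' ^ 2) - (∑ s', p sa.1 sa.2 s' * vπ s') ^ 2 := by
    intro sa
    have hnn : 0 ≤ ∑ s', p sa.1 sa.2 s' * (vπ s' - ∑ s'', p sa.1 sa.2 s'' * vπ s'') ^ 2 :=
      Finset.sum_nonneg fun s' _ => mul_nonneg (hp0 _ _ _) (sq_nonneg _)
    rw [hσv, Real.sq_sqrt hnn]
    have hexp : ∀ s' ∈ Finset.univ, p sa.1 sa.2 s' * (vπ s' - ∑ s'', p sa.1 sa.2 s'' * vπ s'') ^ 2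
        = p sa.1 sa.2 s' * vπ s' ^ 2
          - (2 * ∑ s'', p sa.1 sa.2 s'' * vπ s'') * (p sa.1 sa.2 s' * vπ s')
          + (∑ s'', p sa.1 sa.2 s'' * vπ s'') ^ 2 * p sa.1 sa.2 s' := fun s' _ => by ring
    rw [Finset.sum_congr rfl hexp, Finset.sum_add_distrib, Finset.sum_sub_distrib,
      ← Finset.mul_sum, ← Finset.mul_sum, hp1]
    ring
  -- key pointwise inequality
  have hpt : ∀ s' : S, vπ s' ^ 2 - γ * (∑ s'', p s' (π s') s'' * vπ s'') ^ 2 ≤ K := by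
    intro s'
    obtain ⟨hr0', hr1'⟩ := hr s' (π s')
    have hb := hbellman s'
    have hq0' := hq0 (s', π s')
    have hqK' := hqK (s', π s')
    simp only at hq0' hqK'
    have h1 : (vπ s' ^ 2 - γ * (∑ s'', p s' (π s') s'' * vπ s'') ^ 2) * (1 - γ) ≤ 1 := by
      rw [hb]
      nlinarith [sq_nonneg ((1 - γ) * (∑ s'', p s' (π s') s'' * vπ s'') - r s' (π s')),
        mul_le_mul_of_nonneg_left hqK' hs.le]
    nlinarith [hKs]
  -- the variance step: γ * ∑ p u' ≤ u i - σv i ^ 2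
  have hstep : ∀ i : S × A,
      γ * (∑ s', p i.1 i.2 s' * u (s', π s')) ≤ u i - σv i ^ 2 := by
    intro i
    rw [hσsq i]
    simp only [hu]
    have h1 : ∑ s', p i.1 i.2 s' *
        (vπ s' ^ 2 + γ * K ^ 2 - γ * (∑ s'', p s' (π s') s'' * vπ s'') ^ 2)
        ≤ ∑ s', p i.1 i.2 s' * (K + γ * K ^ 2) :=
      Finset.sum_le_sum fun s' _ =>
        mul_le_mul_of_nonneg_left (by nlinarith [hpt s']) (hp0 _ _ _)
    have h2 : ∑ s', p i.1 i.2 s' * (K + γ * K ^ 2) = K + γ * K ^ 2 := by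
      rw [← Finset.sum_mul, hp1, one_mul]
    have h3 : ∑ s', p i.1 i.2 s' *
        (vπ s' ^ 2 + γ * K ^ 2 - γ * (∑ s'', p s' (π s') s'' * vπ s'') ^ 2)
        = (∑ s', p i.1 i.2 s' * vπ s' ^ 2) + γ * K ^ 2
          - γ * ∑ s', p i.1 i.2 s' * (∑ s'', p s' (π s') s'' * vπ s'') ^ 2 := by
      rw [Finset.sum_congr rfl (fun s' _ => by ring :
          ∀ s' ∈ Finset.univ, p i.1 i.2 s' *
            (vπ s' ^ 2 + γ * K ^ 2 - γ * (∑ s'', p s' (π s') s'' * vπ s'') ^ 2)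
          = (p i.1 i.2 s' * vπ s' ^ 2 + (γ * K ^ 2) * p i.1 i.2 s')
            - γ * (p i.1 i.2 s' * (∑ s'', p s' (π s') s'' * vπ s'') ^ 2)),
        Finset.sum_sub_distrib, Finset.sum_add_distrib, ← Finset.mul_sum, ← Finset.mul_sum, hp1]
      ring
    have h4 : ∑ s', p i.1 i.2 s' * (K ^ 2 - (∑ s'', p s' (π s') s'' * vπ s'') ^ 2)
        = K ^ 2 - ∑ s', p i.1 i.2 s' * (∑ s'', p s' (π s') s'' * vπ s'') ^ 2 := by
      rw [Finset.sum_congr rfl (fun s' _ => by ring :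
          ∀ s' ∈ Finset.univ, p i.1 i.2 s' * (K ^ 2 - (∑ s'', p s' (π s') s'' * vπ s'') ^ 2)
          = K ^ 2 * p i.1 i.2 s' - p i.1 i.2 s' * (∑ s'', p s' (π s') s'' * vπ s'') ^ 2),
        Finset.sum_sub_distrib, ← Finset.mul_sum, hp1, mul_one]
    rw [h2] at h1
    rw [h3] at h1
    rw [h4]
    linarith [hKK]
  -- comparison vector inequality: σv i + γ (Pπ y) i ≤ y i
  have hMy : ∀ i : S × A, σv i + γ * (Pπ.mulVec y) i ≤ y i := by
    intro i
    rw [hProw i y]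
    have hT0 : 0 ≤ ∑ s', p i.1 i.2 s' * u (s', π s') :=
      Finset.sum_nonneg fun s' _ => mul_nonneg (hp0 _ _ _) (hu0 _)
    have hJ : ∑ s', p i.1 i.2 s' * y (s', π s')
        ≤ Real.sqrt (K * ∑ s', p i.1 i.2 s' * u (s', π s')) := by
      have hjen := aux_jensen Finset.univ (fun s' => p i.1 i.2 s')
        (fun s' => K * u (s', π s'))
        (fun s' _ => hp0 _ _ _) (fun s' _ => mul_nonneg hK0.le (hu0 _)) (hp1 i.1 i.2)
      have he : ∑ s', p i.1 i.2 s' * (K * u (s', π s'))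
          = K * ∑ s', p i.1 i.2 s' * u (s', π s') := by
        rw [Finset.mul_sum]
        exact Finset.sum_congr rfl fun s' _ => by ring
      rw [he] at hjen
      simpa only [hy] using hjen
    have hcs := aux_cs γ (σv i) (∑ s', p i.1 i.2 s' * u (s', π s')) (u i)
      hγ0 hγ1 (hσ0 i) hT0 (hu0 i) (hstep i)
    rw [← hK] at hcs
    have : γ * ∑ s', p i.1 i.2 s' * y (s', π s')
        ≤ γ * Real.sqrt (K * ∑ s', p i.1 i.2 s' * u (s', π s')) :=
      mul_le_mul_of_nonneg_left hJ hγ0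
    have hyi : y i = Real.sqrt (K * u i) := by simp only [hy]
    rw [hyi]
    linarith
  -- matrix setup
  set M : Matrix (S × A) (S × A) ℝ := 1 - γ • Pπ with hM
  have hMapp : ∀ (f : S × A → ℝ) (i : S × A),
      (M.mulVec f) i = f i - γ * (Pπ.mulVec f) i := by
    intro f i
    rw [hM, Matrix.sub_mulVec, Matrix.smul_mulVec, Matrix.one_mulVec]
    simp
  have hinj : Function.Injective M.mulVec := by
    intro z1 z2 h12
    have hz : M.mulVec (z1 - z2) = 0 := by
      rw [Matrix.mulVec_sub, h12, sub_self]
    have ha : ∀ i, 0 ≤ (z1 - z2) i := by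
      apply aux_cmp Pπ hP0 hProw1 γ hγ0 hγ1
      intro i
      rw [← hMapp (z1 - z2) i, hz]
      rfl
    have hb : ∀ i, 0 ≤ (z2 - z1) i := by
      apply aux_cmp Pπ hP0 hProw1 γ hγ0 hγ1
      intro i
      have hz' : M.mulVec (z2 - z1) = 0 := by
        rw [Matrix.mulVec_sub, h12, sub_self]
      rw [← hMapp (z2 - z1) i, hz']
      rfl
    funext i
    have := ha i
    have := hb i
    simp only [Pi.sub_apply] at *
    linarith
  have hunit : IsUnit M := Matrix.mulVec_injective_iff_isUnit.1 hinj
  have hdet : IsUnit M.det := (Matrix.isUnit_iff_isUnit_det M).1 hunit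
  set x : S × A → ℝ := M⁻¹.mulVec σv with hx
  have hxeq : M.mulVec x = σv := by
    rw [hx, Matrix.mulVec_mulVec, Matrix.mul_nonsing_inv M hdet, Matrix.one_mulVec]
  have hx0 : ∀ i, 0 ≤ x i := by
    apply aux_cmp Pπ hP0 hProw1 γ hγ0 hγ1
    intro i
    rw [← hMapp x i, hxeq]
    exact hσ0 i
  have hxy : ∀ i, x i ≤ y i := by
    intro i
    have := aux_cmp Pπ hP0 hProw1 γ hγ0 hγ1 (y - x) ?_ i
    · simpa using this
    · intro j
      have e1 : (y - x) j - γ * (Pπ.mulVec (y - x)) j = (M.mulVec (y - x)) j :=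
        (hMapp (y - x) j).symm
      rw [e1, Matrix.mulVec_sub]
      have : (M.mulVec y - M.mulVec x) j = (M.mulVec y) j - σv j := by
        rw [hxeq]; rfl
      rw [this, hMapp y j]
      have := hMy j
      linarith
  -- final bound
  have hbound : Real.sqrt (K * K ^ 2) ≤ Real.sqrt 2 * (1 - γ) ^ (-(1.5 : ℝ)) := by
    have e1 : K * K ^ 2 = ((1 - γ) ^ (3 : ℕ))⁻¹ := by
      rw [hK, ← inv_pow]; ring
    have e2 : ((1 - γ) ^ (3 : ℕ))⁻¹ = (1 - γ) ^ (-(3 : ℝ)) := by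
      rw [Real.rpow_neg hs.le, show ((3:ℝ)) = ((3:ℕ):ℝ) by norm_num, Real.rpow_natCast]
    have e3 : Real.sqrt ((1 - γ) ^ (-(3 : ℝ))) = (1 - γ) ^ (-(1.5) : ℝ) := by
      rw [Real.sqrt_eq_rpow, ← Real.rpow_mul hs.le]
      norm_num
    rw [e1, e2, e3]
    have h1 : (1 : ℝ) ≤ Real.sqrt 2 := by
      rw [show (1 : ℝ) = Real.sqrt 1 by simp]
      exact Real.sqrt_le_sqrt (by norm_num)
    nlinarith [Real.rpow_nonneg hs.le (-(1.5) : ℝ)]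
  have hBnn : 0 ≤ Real.sqrt 2 * (1 - γ) ^ (-(1.5 : ℝ)) :=
    mul_nonneg (Real.sqrt_nonneg _) (Real.rpow_nonneg hs.le _)
  rw [pi_norm_le_iff_of_nonneg hBnn]
  intro i
  rw [Real.norm_eq_abs, abs_of_nonneg (hx0 i)]
  calc x i ≤ y i := hxy i
  _ ≤ Real.sqrt (K * K ^ 2) := by
    simp only [hy]
    exact Real.sqrt_le_sqrt (mul_le_mul_of_nonneg_left (huC i) hK0.le)
  _ ≤ Real.sqrt 2 * (1 - γ) ^ (-(1.5 : ℝ)) := hbound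
end

section
/- Let γ ∈ [0,1), let ξ ∈ ℝ^{SA} be a nonnegative vector, P a row-stochastic SA×SA matrix, and suppose vectors e_l ∈ ℝ^{SA} satisfy e_0 ≤ C·𝟙 (C ≥ 0) and e_l ≤ γP e_{l-1} + ξ for all l ≥ 1. Then e_l ≤ γ^l C·𝟙 + (I - γP)^{-1} ξ for all l ≥ 0. -/
theorem stmt_19 {n : ℕ} (P : Matrix (Fin n) (Fin n) ℝ) (γ : ℝ)
    (hP0 : ∀ i j, 0 ≤ P i j) (hP1 : ∀ i, ∑ j, P i j = 1)
    (hγ0 : 0 ≤ γ) (hγ1 : γ < 1)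
    (ξ : Fin n → ℝ) (hξ : ∀ i, 0 ≤ ξ i)
    (C : ℝ) (hC : 0 ≤ C)
    (e : ℕ → Fin n → ℝ) (he0 : e 0 ≤ fun _ => C)
    (hrec : ∀ l : ℕ, e (l + 1) ≤ γ • P.mulVec (e l) + ξ) :
    ∀ l : ℕ, e l ≤ (fun _ => γ ^ l * C) + (1 - γ • P)⁻¹.mulVec ξ := by
  -- invertibility of (1 - γ P)
  have hdet : IsUnit (1 - γ • P).det := by
    rw [isUnit_iff_ne_zero]
    intro h
    rw [← Matrix.exists_mulVec_eq_zero_iff] at h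
    obtain ⟨v, hv, hMv⟩ := h
    apply hv
    rw [Matrix.sub_mulVec, Matrix.one_mulVec, Matrix.smul_mulVec, sub_eq_zero] at hMv
    rcases isEmpty_or_nonempty (Fin n) with hE | hE
    · funext i; exact (hE.false i).elim
    obtain ⟨i, -, hi⟩ := Finset.exists_max_image Finset.univ (fun i => |v i|)
      ⟨Classical.arbitrary (Fin n), Finset.mem_univ _⟩
    have hvi : v i = γ * ∑ j, P i j * v j := by
      have := congrFun hMv i
      simpa [Matrix.mulVec, dotProduct] using this
    have hbound : |v i| ≤ γ * |v i| := by
      calc |v i| = γ * |∑ j, P i j * v j| := by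
            rw [hvi, abs_mul, abs_of_nonneg hγ0]
        _ ≤ γ * |v i| := by
            apply mul_le_mul_of_nonneg_left _ hγ0
            calc |∑ j, P i j * v j| ≤ ∑ j, |P i j * v j| := Finset.abs_sum_le_sum_abs _ _
              _ ≤ ∑ j, P i j * |v i| := by
                  apply Finset.sum_le_sum
                  intro j _
                  rw [abs_mul, abs_of_nonneg (hP0 i j)]
                  exact mul_le_mul_of_nonneg_left (hi j (Finset.mem_univ j)) (hP0 i j)
              _ = |v i| := by rw [← Finset.sum_mul, hP1, one_mul]
    have hvi0 : |v i| = 0 := by nlinarith [abs_nonneg (v i)]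
    funext j
    have hj := hi j (Finset.mem_univ j)
    rw [hvi0] at hj
    exact abs_eq_zero.mp (le_antisymm hj (abs_nonneg _))
  set w := (1 - γ • P)⁻¹.mulVec ξ with hw_def
  have hfix : ∀ i, γ * (P.mulVec w) i + ξ i = w i := by
    have h : (1 - γ • P).mulVec w = ξ := by
      rw [hw_def, Matrix.mulVec_mulVec, Matrix.mul_nonsing_inv _ hdet, Matrix.one_mulVec]
    rw [Matrix.sub_mulVec, Matrix.one_mulVec, Matrix.smul_mulVec] at h
    intro i
    have := congrFun h i
    simp only [Pi.sub_apply, Pi.smul_apply, smul_eq_mul] at this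
    linarith
  -- nonnegativity of w
  have hw0 : ∀ i, 0 ≤ w i := by
    rcases isEmpty_or_nonempty (Fin n) with hE | hE
    · intro i; exact (hE.false i).elim
    obtain ⟨i, -, hi⟩ := Finset.exists_min_image Finset.univ (fun i => w i)
      ⟨Classical.arbitrary (Fin n), Finset.mem_univ _⟩
    intro j
    suffices h : 0 ≤ w i from le_trans h (hi j (Finset.mem_univ j))
    by_contra hneg
    push_neg at hneg
    have h1 : w i ≥ γ * w i := by
      have h2 : (P.mulVec w) i ≥ w i := by
        calc (P.mulVec w) i = ∑ j, P i j * w j := rfl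
          _ ≥ ∑ j, P i j * w i := by
              apply Finset.sum_le_sum
              intro j _
              exact mul_le_mul_of_nonneg_left (hi j (Finset.mem_univ j)) (hP0 i j)
          _ = w i := by rw [← Finset.sum_mul, hP1, one_mul]
      have := hfix i
      nlinarith [hξ i]
    nlinarith
  intro l
  induction l with
  | zero =>
    intro i
    have h1 : e 0 i ≤ C := he0 i
    simp only [Pi.add_apply, pow_zero, one_mul]
    linarith [hw0 i]
  | succ l ih =>
    intro i
    have h1 : e (l + 1) i ≤ γ * (P.mulVec (e l)) i + ξ i := hrec l i
    have h2 : (P.mulVec (e l)) i ≤ (P.mulVec ((fun _ => γ ^ l * C) + w)) i := by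
      simp only [Matrix.mulVec, dotProduct]
      apply Finset.sum_le_sum
      intro j _
      exact mul_le_mul_of_nonneg_left (ih j) (hP0 i j)
    have h3 : (P.mulVec ((fun _ => γ ^ l * C) + w)) i = γ ^ l * C + (P.mulVec w) i := by
      simp only [Matrix.mulVec, dotProduct, Pi.add_apply, mul_add,
        Finset.sum_add_distrib]
      rw [← Finset.sum_mul, hP1, one_mul]
    have h4 := hfix i
    simp only [Pi.add_apply]
    calc e (l + 1) i ≤ γ * (P.mulVec (e l)) i + ξ i := h1
      _ ≤ γ * (γ ^ l * C + (P.mulVec w) i) + ξ i := by nlinarith [h2, h3.ge, h3.le]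
      _ = γ ^ (l + 1) * C + w i := by rw [pow_succ]; linarith
end
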